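/- arXiv:0801.4665 — 2 statements merged into one kernel-verified Lean document; each statement's English description precedes it below -/
import Mathlib

section
/- Define a sequence of multisets W(m,n) of positive integers for relatively prime positive integers m < n by the following Euclidean-type algorithm: set p₀ = n, p₁ = m; at step i ≥ 1 write pᵢ₋₁ = aᵢ·pᵢ + pᵢ₊₁ with 0 ≤ pᵢ₊₁ < pᵢ, and include aᵢ copies of pᵢ in W(m,n); stop when some pᵢ = 0. Then the sum of the squares of the elements of W(m,n) equals m·n. -/
/-- The weight multiset of the Euclidean algorithm applied to the pair `(n, m)` (so `p₀ = n`,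
`p₁ = m`): at each step with current pair `(n, m)`, `m ≠ 0`, we record `n / m` copies of `m`
and continue with `(m, n % m)`, stopping when the remainder is `0`. -/
def W : ℕ → ℕ → Multiset ℕ
  | _, 0 => 0
  | n, (m + 1) => Multiset.replicate (n / (m + 1)) (m + 1) + W (m + 1) (n % (m + 1))
termination_by n m => m
decreasing_by exact Nat.mod_lt _ (Nat.succ_pos m)

/-!
The Euclidean algorithm cuts an `m × n` rectangle into squares: a step removes `n / m` squares
of side `m` and leaves an `m × (n % m)` rectangle, so the sum of the squared weights is the area
`m * n`.
-/

theorem W_zero_right (n : ℕ) : W n 0 = 0 := by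
  rw [W]

theorem W_of_pos {m : ℕ} (n : ℕ) (hm : 0 < m) :
    W n m = Multiset.replicate (n / m) m + W m (n % m) := by
  obtain ⟨k, rfl⟩ := Nat.exists_eq_succ_of_ne_zero hm.ne'
  rw [W]

theorem stmt4_general (m n : ℕ) :
    ((W n m).map (fun w => w ^ 2)).sum = m * n := by
  induction m, n using Nat.gcd.induction with
  | H0 n => simp [W_zero_right]
  | H1 m n hm ih =>
    rw [W_of_pos n hm, Multiset.map_add, Multiset.sum_add, ih, Multiset.map_replicate,
      Multiset.sum_replicate, smul_eq_mul]
    calc n / m * m ^ 2 + n % m * m = m * (m * (n / m) + n % m) := by ring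
      _ = m * n := by rw [Nat.div_add_mod]

/-- For relatively prime positive integers `m < n`, the sum of the squares of the weights in
`W(m,n)` equals `m·n`. -/
theorem stmt4 (m n : ℕ) (h0 : 0 < m) (hmn : m < n) (hcop : Nat.Coprime m n) :
    ((W n m).map (fun w => w ^ 2)).sum = m * n :=
  stmt4_general m n
end

section
/- Let a_λ(dL − ∑_{i=1}^{8} mᵢEᵢ) = 3d − (m₁+m₂+m₃) − λ(m₄+⋯+m₈). Then a_λ is positive on all classes of the forms Eᵢ; L − Eᵢ − Eⱼ; 2L minus five distinct Eᵢ's; 3L − 2Eᵢ − (six other Eⱼ's); 4L − 2(Eᵢ+Eⱼ+E_k) − (five other E's); 5L − 2(six E's) − (two other E's); and 6L − 3Eᵢ − 2(the other seven E's), for all choices of distinct indices in {1,…,8}, if and only if 0 < λ < 12/11. -/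
/-!
Every weight is `1` or `λ`, and the eight weights add up to `3 + 5λ`. Necessity comes from the
classes `E₄` and `6L − 3E₄ − 2∑_{j≠4} Eⱼ`, whose values are `λ` and `12 − 11λ`. For sufficiency
put `m = max 1 λ < 12/11`: each weight is at most `m`, so a sum over `k` indices is at most `k m`;
after rewriting sums over complements through the total `3 + 5λ ≤ 3 + 5m`, the seven families
take values at least `3 − 2m`, `6 − 5m`, `9 − 8m` and `12 − 11m`, all positive.
-/

open Finset

/-- The values of `a_λ` on `E₁, …, E₈` in the 8-point blow up: `a_λ(Eᵢ) = 1` for the first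
three indices and `a_λ(Eᵢ) = λ` for the last five, so that
`a_λ(dL − ∑mᵢEᵢ) = 3d − (m₁+m₂+m₃) − λ(m₄+⋯+m₈)`. -/
noncomputable def wgt8 (lam : ℝ) : Fin 8 → ℝ := fun i => if (i : ℕ) < 3 then 1 else lam

lemma wgt8_three (lam : ℝ) : wgt8 lam 3 = lam := rfl

lemma wgt8_pos {lam : ℝ} (hlam : 0 < lam) (i : Fin 8) : 0 < wgt8 lam i := by
  unfold wgt8
  split_ifs
  exacts [one_pos, hlam]

lemma wgt8_le_max_one (lam : ℝ) (i : Fin 8) : wgt8 lam i ≤ max 1 lam := by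
  unfold wgt8
  split_ifs
  exacts [le_max_left _ _, le_max_right _ _]

lemma sum_wgt8_le_card_mul (lam : ℝ) (S : Finset (Fin 8)) :
    ∑ i ∈ S, wgt8 lam i ≤ #S * max 1 lam := by
  simpa only [nsmul_eq_mul] using
    Finset.sum_le_card_nsmul S _ _ fun i _ => wgt8_le_max_one lam i

lemma sum_wgt8_univ (lam : ℝ) : ∑ i, wgt8 lam i = 3 + 5 * lam := by
  simp only [Fin.sum_univ_eight, wgt8]
  norm_num
  ring

lemma sum_wgt8_compl (lam : ℝ) (S : Finset (Fin 8)) :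
    ∑ i ∈ Sᶜ, wgt8 lam i = 3 + 5 * lam - ∑ i ∈ S, wgt8 lam i := by
  rw [← sum_wgt8_univ lam, ← Finset.sum_compl_add_sum S, add_sub_cancel_right]

lemma sum_wgt8_univ_sdiff_singleton (lam : ℝ) (i : Fin 8) :
    ∑ j ∈ univ \ {i}, wgt8 lam j = 3 + 5 * lam - wgt8 lam i := by
  rw [Finset.sum_sdiff_eq_sub (subset_univ _), sum_singleton, sum_wgt8_univ]

/-- `a_λ` is positive on all classes of the forms `Eᵢ`; `L − Eᵢ − Eⱼ`; `2L` minus five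
distinct `E`'s; `3L − 2Eᵢ` minus six others; `4L − 2(three E's)` minus the other five;
`5L − 2(six E's)` minus the other two; `6L − 3Eᵢ − 2(the other seven)`, for all choices of
distinct indices in `{1,…,8}`, if and only if `0 < λ < 12/11`. -/
theorem stmt10 (lam : ℝ) :
    ((∀ i : Fin 8, 0 < wgt8 lam i) ∧
     (∀ i j : Fin 8, i ≠ j → 0 < 3 - wgt8 lam i - wgt8 lam j) ∧
     (∀ S : Finset (Fin 8), S.card = 5 → 0 < 6 - ∑ i ∈ S, wgt8 lam i) ∧
     (∀ (i : Fin 8) (S : Finset (Fin 8)), S.card = 6 → i ∉ S →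
        0 < 9 - 2 * wgt8 lam i - ∑ j ∈ S, wgt8 lam j) ∧
     (∀ S : Finset (Fin 8), S.card = 3 →
        0 < 12 - 2 * ∑ i ∈ S, wgt8 lam i - ∑ j ∈ Sᶜ, wgt8 lam j) ∧
     (∀ S : Finset (Fin 8), S.card = 6 →
        0 < 15 - 2 * ∑ i ∈ S, wgt8 lam i - ∑ j ∈ Sᶜ, wgt8 lam j) ∧
     (∀ i : Fin 8, 0 < 18 - 3 * wgt8 lam i - 2 * ∑ j ∈ Finset.univ \ {i}, wgt8 lam j))
    ↔ (0 < lam ∧ lam < 12 / 11) := by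
  constructor
  · rintro ⟨hE, -, -, -, -, -, hsextic⟩
    have h := hsextic 3
    rw [sum_wgt8_univ_sdiff_singleton, wgt8_three] at h
    exact ⟨wgt8_three lam ▸ hE 3, by linarith⟩
  · rintro ⟨hpos, hlt⟩
    have hm : max 1 lam < 12 / 11 := max_lt (by norm_num) hlt
    have hlam : lam ≤ max 1 lam := le_max_right _ _
    have hw := wgt8_le_max_one lam
    refine ⟨wgt8_pos hpos, fun i j _ => ?_, fun S hS => ?_, fun i S hS _ => ?_,
      fun S hS => ?_, fun S hS => ?_, fun i => ?_⟩
    · linarith [hw i, hw j]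
    · have hS_le := sum_wgt8_le_card_mul lam S
      rw [hS, Nat.cast_ofNat] at hS_le
      linarith
    · have hS_le := sum_wgt8_le_card_mul lam S
      rw [hS, Nat.cast_ofNat] at hS_le
      linarith [hw i]
    · have hS_le := sum_wgt8_le_card_mul lam S
      rw [hS, Nat.cast_ofNat] at hS_le
      rw [sum_wgt8_compl]
      linarith
    · have hS_le := sum_wgt8_le_card_mul lam S
      rw [hS, Nat.cast_ofNat] at hS_le
      rw [sum_wgt8_compl]
      linarith
    · rw [sum_wgt8_univ_sdiff_singleton]
      linarith [hw i]
end
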